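/- Let λ > 0, c > 1 and c̄ = (c+1)/(c−1), and suppose λ/n ≥ c·‖∇Λ(η₀)‖_∞. Let κ > 0 satisfy κ·‖δ_T‖ ≤ ‖√w_i·x_i'δ‖_{2,n} for every δ ∈ Δ_c̄ (weighted restricted eigenvalue), and let q̄ > 0 satisfy q̄·(1/n)∑_{i=1}^n w_i·|x_i'δ|³ ≤ ((1/n)∑_{i=1}^n w_i·(x_i'δ)²)^{3/2} for every δ ∈ Δ_c̄, with q̄ > 3·(1+1/c)·λ·√s/(n·κ). Then every global minimizer η̂ of η ↦ Λ(η) + (λ/n)·‖η‖₁ satisfies ‖√w_i·x_i'(η̂ − η₀)‖_{2,n} ≤ 3·(1+1/c)·λ·√s/(n·κ) and ‖η̂ − η₀‖₁ ≤ 3·((1+c)·(1+c̄)/c)·λ·s/(n·κ²). -/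

import Mathlib

open Finset

/-- The logistic link function `G(t) = exp t / (1 + exp t)`. -/
noncomputable def logistic (t : ℝ) : ℝ := Real.exp t / (1 + Real.exp t)

/-- Inner product `x_i'η` of the `i`-th design vector with `η`. -/
def xdot {n p : ℕ} (x : Fin n → Fin p → ℝ) (η : Fin p → ℝ) (i : Fin n) : ℝ :=
  ∑ j, x i j * η j

/-- Average logistic negative log-likelihood
`Λ(η) = (1/n)∑ᵢ [log(1+exp(x_i'η)) − y_i·(x_i'η)]`. -/
noncomputable def Lam {n p : ℕ} (x : Fin n → Fin p → ℝ) (y : Fin n → ℝ)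
    (η : Fin p → ℝ) : ℝ :=
  (1 / (n : ℝ)) * ∑ i, (Real.log (1 + Real.exp (xdot x η i)) - y i * xdot x η i)

/-- Gradient of `Λ`: `∇Λ(η) = (1/n)∑ᵢ (G(x_i'η) − y_i)·x_i`. -/
noncomputable def gradLam {n p : ℕ} (x : Fin n → Fin p → ℝ) (y : Fin n → ℝ)
    (η : Fin p → ℝ) (j : Fin p) : ℝ :=
  (1 / (n : ℝ)) * ∑ i, (logistic (xdot x η i) - y i) * x i j

/-- Sup-norm `‖∇Λ(η)‖_∞` of the gradient of `Λ`. -/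
noncomputable def gradLamSup {n p : ℕ} (x : Fin n → Fin p → ℝ) (y : Fin n → ℝ)
    (η : Fin p → ℝ) : ℝ :=
  ⨆ j : Fin p, |gradLam x y η j|

/-- The logistic weights `w_i = G(x_i'η₀)·(1 − G(x_i'η₀))`. -/
noncomputable def wgt {n p : ℕ} (x : Fin n → Fin p → ℝ) (η₀ : Fin p → ℝ) (i : Fin n) : ℝ :=
  logistic (xdot x η₀ i) * (1 - logistic (xdot x η₀ i))

/-- Weighted prediction norm `‖√w_i·x_i'δ‖_{2,n} = ((1/n)∑ᵢ w_i (x_i'δ)²)^{1/2}`. -/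
noncomputable def predNorm {n p : ℕ} (x : Fin n → Fin p → ℝ) (w : Fin n → ℝ)
    (δ : Fin p → ℝ) : ℝ :=
  Real.sqrt ((1 / (n : ℝ)) * ∑ i, w i * xdot x δ i ^ 2)

/-- Support of a coefficient vector. -/
noncomputable def supp {p : ℕ} (η : Fin p → ℝ) : Finset (Fin p) :=
  Finset.univ.filter (fun j => η j ≠ 0)

/-- ℓ1 norm of a vector in `ℝ^p`. -/
def l1norm {p : ℕ} (δ : Fin p → ℝ) : ℝ := ∑ j, |δ j|

/-- The restricted cone `Δ_c̄ = {δ : ‖δ_{T^c}‖₁ ≤ c̄·‖δ_T‖₁}` for a support set `T`. -/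
noncomputable def inCone {p : ℕ} (T : Finset (Fin p)) (cbar : ℝ) (δ : Fin p → ℝ) : Prop :=
  ∑ j ∈ Tᶜ, |δ j| ≤ cbar * ∑ j ∈ T, |δ j|

/-!
Write `δ = η̂ - η₀`. The penalized criterion is convex, so it does not exceed its value at `η₀`
anywhere on the segment from `η₀` to the minimizer `η̂`. Combined with `λ/n ≥ c‖∇Λ(η₀)‖_∞` and
`η₀ = 0` off `T`, this bounds the Bregman excess `Λ(η₀ + aδ) - Λ(η₀) - ∇Λ(η₀)'(aδ)`, for
`0 ≤ a ≤ 1`, by `a(λ/n)((1 + 1/c)‖δ_T‖₁ - (1 - 1/c)‖δ_{T^c}‖₁)`. The excess is nonnegative, so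
taking `a = 1` puts `δ` in the cone `Δ_c̄`.

The curvature `w = G(1 - G)` of the logistic loss changes by at most a factor `exp(-|t|)` under a
shift by `t`. Hence the loss has the Bregman remainder lower bound `w(a)(t²/2 - |t|³/6)`, and the
excess at `aδ` is at least `(ar)²/2 - a³R/6`, where `r = ‖√w_i x_i'δ‖_{2,n}` and `R` is the weighted
cubic moment. By the restricted eigenvalue condition the upper bound is at most `aAr`, where `3A` is
the claimed rate. Since `q̄R ≤ r³` and `q̄ > 3A`, taking `ar = min r q̄` rules out `r > 3A`. The
`ℓ1` bound then follows from the cone condition and the restricted eigenvalue condition again.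
-/

open Real Set

noncomputable def softplus (t : ℝ) : ℝ := log (1 + exp t)

noncomputable def softplusRemainder (a t : ℝ) : ℝ :=
  softplus (a + t) - softplus a - sigmoid a * t

lemma logistic_eq_sigmoid : logistic = sigmoid := by
  funext t
  rw [logistic, sigmoid_def, exp_neg]
  field_simp
  ring

lemma softplus_neg (t : ℝ) : softplus (-t) = softplus t - t := by
  have h : 1 + exp (-t) = (1 + exp t) * exp (-t) := by
    rw [add_mul, one_mul, ← exp_add, add_neg_cancel, exp_zero, add_comm]
  rw [softplus, softplus, h, log_mul (by positivity) (by positivity), log_exp]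
  ring

lemma hasDerivAt_softplus (t : ℝ) : HasDerivAt softplus (sigmoid t) t := by
  show HasDerivAt (fun t => log (1 + exp t)) _ t
  convert ((hasDerivAt_exp t).const_add 1).log (by positivity) using 1
  rw [sigmoid_def, exp_neg]
  field_simp
  ring

lemma softplusRemainder_neg (a t : ℝ) :
    softplusRemainder (-a) (-t) = softplusRemainder a t := by
  simp only [softplusRemainder, ← neg_add, softplus_neg, sigmoid_neg]
  ring

lemma softplusRemainder_zero (a : ℝ) : softplusRemainder a 0 = 0 := by
  simp [softplusRemainder]

lemma hasDerivAt_softplusRemainder (a t : ℝ) :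
    HasDerivAt (softplusRemainder a) (sigmoid (a + t) - sigmoid a) t := by
  have := (((hasDerivAt_softplus (a + t)).comp_const_add a t).sub_const (softplus a)).sub
    ((hasDerivAt_id t).const_mul (sigmoid a))
  rwa [mul_one] at this

lemma sigmoid_mul_one_sub_sigmoid_neg (a : ℝ) :
    sigmoid (-a) * (1 - sigmoid (-a)) = sigmoid a * (1 - sigmoid a) := by
  rw [sigmoid_neg]; ring

lemma exp_neg_mul_sigmoid_le_sigmoid_sub {t : ℝ} (ht : 0 ≤ t) (b : ℝ) :
    exp (-t) * sigmoid b ≤ sigmoid (b - t) := by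
  have h : exp (-t) * sigmoid b = (exp t * (1 + exp (-b)))⁻¹ := by
    rw [sigmoid_def, mul_inv, exp_neg]
  rw [h, sigmoid_def]
  gcongr
  rw [mul_add, mul_one, ← exp_add, neg_sub, sub_eq_neg_add, add_comm (-b)]
  linarith [one_le_exp ht]

lemma sigmoid_weight_mul_one_sub_le {t : ℝ} (ht : 0 ≤ t) (a : ℝ) :
    sigmoid a * (1 - sigmoid a) * (1 - t) ≤ sigmoid (a + t) * (1 - sigmoid (a + t)) := by
  have hσ : sigmoid a ≤ sigmoid (a + t) := sigmoid_le (by linarith)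
  have hτ : exp (-t) * (1 - sigmoid a) ≤ 1 - sigmoid (a + t) := by
    rw [← sigmoid_neg, ← sigmoid_neg, neg_add']
    exact exp_neg_mul_sigmoid_le_sigmoid_sub ht (-a)
  have hexp : 1 - t ≤ exp (-t) := by linarith [add_one_le_exp (-t)]
  have h1 : 0 ≤ 1 - sigmoid a := by linarith [sigmoid_lt_one a]
  calc sigmoid a * (1 - sigmoid a) * (1 - t)
      ≤ sigmoid a * (exp (-t) * (1 - sigmoid a)) := by
        rw [mul_assoc, mul_comm (1 - sigmoid a)]
        gcongr
        exact (sigmoid_pos a).le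
    _ ≤ sigmoid (a + t) * (1 - sigmoid (a + t)) := by
        gcongr
        exact (sigmoid_pos _).le

lemma nonneg_of_map_zero_of_hasDerivAt_nonneg {f f' : ℝ → ℝ} (hf : ∀ u, HasDerivAt f (f' u) u)
    (h0 : f 0 = 0) (hf' : ∀ u, 0 < u → 0 ≤ f' u) {t : ℝ} (ht : 0 ≤ t) : 0 ≤ f t := by
  have hmono : MonotoneOn f (Ici 0) :=
    monotoneOn_of_hasDerivWithinAt_nonneg (convex_Ici 0)
      (fun u _ => (hf u).continuousAt.continuousWithinAt)
      (fun u _ => (hf u).hasDerivWithinAt)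
      (by simpa only [interior_Ici, Set.mem_Ioi] using hf')
  simpa [h0] using hmono self_mem_Ici ht ht

lemma softplusRemainder_nonneg (a t : ℝ) : 0 ≤ softplusRemainder a t := by
  wlog ht : 0 ≤ t generalizing a t
  · rw [← softplusRemainder_neg]
    exact this (-a) (-t) (by linarith)
  exact nonneg_of_map_zero_of_hasDerivAt_nonneg (hasDerivAt_softplusRemainder a)
    (softplusRemainder_zero a) (fun u hu => sub_nonneg.2 (sigmoid_le (by linarith))) ht

lemma sigmoid_weight_mul_le_softplusRemainder (a t : ℝ) :
    sigmoid a * (1 - sigmoid a) * (t ^ 2 / 2 - |t| ^ 3 / 6) ≤ softplusRemainder a t := by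
  wlog ht : 0 ≤ t generalizing a t
  · rw [← softplusRemainder_neg, ← sigmoid_mul_one_sub_sigmoid_neg, ← abs_neg, ← neg_sq]
    exact this (-a) (-t) (by linarith)
  set w := sigmoid a * (1 - sigmoid a)
  -- the gap has second derivative `w(a + u) - w(1 - u) ≥ 0`; integrate twice from `0`
  have hderiv : ∀ u, HasDerivAt (fun u => sigmoid (a + u) - sigmoid a - w * (u - u ^ 2 / 2))
      (sigmoid (a + u) * (1 - sigmoid (a + u)) - w * (1 - u)) u := by
    intro u
    refine ((((hasDerivAt_sigmoid (a + u)).comp_const_add a u).sub_const (sigmoid a)).sub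
      (((hasDerivAt_id u).sub ((hasDerivAt_pow 2 u).div_const 2)).const_mul w)).congr_deriv ?_
    norm_num
  have hslope : ∀ u, 0 ≤ u → 0 ≤ sigmoid (a + u) - sigmoid a - w * (u - u ^ 2 / 2) :=
    fun u hu => nonneg_of_map_zero_of_hasDerivAt_nonneg hderiv (by simp)
      (fun v hv => sub_nonneg.2 (sigmoid_weight_mul_one_sub_le hv.le a)) hu
  have hrem : ∀ u, HasDerivAt (fun u => softplusRemainder a u - w * (u ^ 2 / 2 - u ^ 3 / 6))
      (sigmoid (a + u) - sigmoid a - w * (u - u ^ 2 / 2)) u := by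
    intro u
    refine ((hasDerivAt_softplusRemainder a u).sub
      ((((hasDerivAt_pow 2 u).div_const 2).sub
        ((hasDerivAt_pow 3 u).div_const 6)).const_mul w)).congr_deriv ?_
    push_cast
    ring
  have := nonneg_of_map_zero_of_hasDerivAt_nonneg hrem (by simp [softplusRemainder_zero])
    (fun u hu => hslope u hu.le) ht
  rw [abs_of_nonneg ht]
  linarith

lemma le_three_mul_of_forall_sq_sub_cube_le {r R A q : ℝ} (hA : 0 ≤ A) (hAq : 3 * A < q)
    (hR : q * R ≤ r ^ 3)
    (h : ∀ a, 0 ≤ a → a ≤ 1 → (a * r) ^ 2 / 2 - a ^ 3 * R / 6 ≤ a * A * r) :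
    r ≤ 3 * A := by
  by_contra! hr
  have hr0 : 0 < r := by linarith
  have hq0 : 0 < q := by linarith
  set b := min r q
  have hb : 3 * A < b := lt_min hr hAq
  have hb0 : 0 < b := by linarith
  have hbr : b / r * r = b := div_mul_cancel₀ b hr0.ne'
  have key := h (b / r) (by positivity) ((div_le_one hr0).2 (min_le_left r q))
  rw [hbr, mul_right_comm, hbr] at key
  have hcube : (b / r) ^ 3 * R ≤ b ^ 2 := by
    calc (b / r) ^ 3 * R ≤ (b / r) ^ 3 * (r ^ 3 / q) := by
          gcongr
          rwa [le_div_iff₀' hq0]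
      _ = b ^ 2 * (b / q) := by field_simp
      _ ≤ b ^ 2 * 1 := by gcongr; exact (div_le_one hq0).2 (min_le_right r q)
      _ = b ^ 2 := mul_one _
  linarith [mul_lt_mul_of_pos_left hb hb0]

lemma ConvexOn.map_add_smul_sub_le {E : Type*} [AddCommGroup E] [Module ℝ E] {f : E → ℝ}
    (hf : ConvexOn ℝ univ f) {z : E} (hz : ∀ w, f z ≤ f w) (w : E) {a : ℝ} (ha0 : 0 ≤ a)
    (ha1 : a ≤ 1) : f (w + a • (z - w)) ≤ f w := by
  have hseg : w + a • (z - w) = (1 - a) • w + a • z := by module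
  calc f (w + a • (z - w)) ≤ (1 - a) • f w + a • f z :=
        hseg ▸ hf.2 trivial trivial (by linarith) ha0 (by ring)
    _ ≤ (1 - a) • f w + a • f w := by gcongr; exact hz w
    _ = f w := by rw [smul_eq_mul, smul_eq_mul]; ring

section Norms

variable {p : ℕ}

lemma sum_abs_smul (s : Finset (Fin p)) (a : ℝ) (v : Fin p → ℝ) :
    ∑ j ∈ s, |(a • v) j| = |a| * ∑ j ∈ s, |v j| := by
  simp only [Pi.smul_apply, smul_eq_mul, abs_mul, mul_sum]

lemma l1norm_smul (a : ℝ) (v : Fin p → ℝ) : l1norm (a • v) = |a| * l1norm v :=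
  sum_abs_smul univ a v

lemma l1norm_eq_sum_add_sum_compl (T : Finset (Fin p)) (v : Fin p → ℝ) :
    l1norm v = ∑ j ∈ T, |v j| + ∑ j ∈ Tᶜ, |v j| :=
  (sum_add_sum_compl T _).symm

lemma convexOn_l1norm : ConvexOn ℝ univ (l1norm (p := p)) := by
  refine ⟨convex_univ, fun η _ ζ _ a b ha hb _ => ?_⟩
  simp only [l1norm, smul_eq_mul, mul_sum, ← sum_add_distrib]
  gcongr with j
  calc |(a • η + b • ζ) j| ≤ |a * η j| + |b * ζ j| := abs_add_le _ _
    _ = a * |η j| + b * |ζ j| := by rw [abs_mul, abs_mul, abs_of_nonneg ha, abs_of_nonneg hb]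

lemma l1norm_sub_l1norm_add_le {T : Finset (Fin p)} {η : Fin p → ℝ} (hη : ∀ j ∉ T, η j = 0)
    (v : Fin p → ℝ) :
    l1norm η - l1norm (η + v) ≤ ∑ j ∈ T, |v j| - ∑ j ∈ Tᶜ, |v j| := by
  have hT : ∑ j ∈ T, |η j| - ∑ j ∈ T, |(η + v) j| ≤ ∑ j ∈ T, |v j| := by
    rw [← sum_sub_distrib]
    gcongr with j
    calc |η j| - |(η + v) j| ≤ |η j - (η + v) j| := abs_sub_abs_le_abs_sub _ _
      _ = |v j| := by rw [Pi.add_apply, sub_add_cancel_left, abs_neg]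
  have hη0 : ∑ j ∈ Tᶜ, |η j| = 0 :=
    sum_eq_zero fun j hj => by rw [hη j (mem_compl.1 hj), abs_zero]
  have hηv : ∑ j ∈ Tᶜ, |(η + v) j| = ∑ j ∈ Tᶜ, |v j| :=
    sum_congr rfl fun j hj => by rw [Pi.add_apply, hη j (mem_compl.1 hj), zero_add]
  rw [l1norm_eq_sum_add_sum_compl T η, l1norm_eq_sum_add_sum_compl T (η + v)]
  linarith

lemma abs_sum_mul_le_iSup_mul_l1norm (g v : Fin p → ℝ) :
    |∑ j, g j * v j| ≤ (⨆ j, |g j|) * l1norm v := by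
  calc |∑ j, g j * v j| ≤ ∑ j, |g j * v j| := abs_sum_le_sum_abs _ _
    _ ≤ ∑ j, (⨆ j, |g j|) * |v j| := by
        gcongr with j
        rw [abs_mul]
        gcongr
        exact le_ciSup (Set.finite_range fun j => |g j|).bddAbove j
    _ = (⨆ j, |g j|) * l1norm v := by rw [l1norm, mul_sum]

lemma sum_abs_le_sqrt_card_mul_sqrt_sum_sq (T : Finset (Fin p)) (v : Fin p → ℝ) :
    ∑ j ∈ T, |v j| ≤ √(#T : ℝ) * √(∑ j ∈ T, v j ^ 2) := by
  rw [← sqrt_mul (Nat.cast_nonneg _)]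
  refine le_trans (le_abs_self _) (abs_le_sqrt ?_)
  simpa only [sq_abs] using sq_sum_le_card_mul_sum_sq (s := T) (f := fun j => |v j|)

lemma mul_sum_abs_le_sqrt_card_mul {T : Finset (Fin p)} {v : Fin p → ℝ} {κ r : ℝ} (hκ : 0 ≤ κ)
    (hRE : κ * √(∑ j ∈ T, v j ^ 2) ≤ r) : κ * ∑ j ∈ T, |v j| ≤ √(#T : ℝ) * r := by
  calc κ * ∑ j ∈ T, |v j| ≤ κ * (√(#T : ℝ) * √(∑ j ∈ T, v j ^ 2)) := by
        gcongr
        exact sum_abs_le_sqrt_card_mul_sqrt_sum_sq T v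
    _ = √(#T : ℝ) * (κ * √(∑ j ∈ T, v j ^ 2)) := by ring
    _ ≤ √(#T : ℝ) * r := by gcongr

lemma l1norm_le_of_inCone {T : Finset (Fin p)} {v : Fin p → ℝ} {cbar κ r : ℝ} (hcbar : 0 ≤ cbar)
    (hκ : 0 < κ) (hcone : inCone T cbar v) (hRE : κ * √(∑ j ∈ T, v j ^ 2) ≤ r) :
    l1norm v ≤ (1 + cbar) * √(#T : ℝ) * r / κ := by
  have hT : ∑ j ∈ T, |v j| ≤ √(#T : ℝ) * r / κ := by
    rw [le_div_iff₀' hκ]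
    exact mul_sum_abs_le_sqrt_card_mul hκ.le hRE
  unfold inCone at hcone
  calc l1norm v = ∑ j ∈ T, |v j| + ∑ j ∈ Tᶜ, |v j| := l1norm_eq_sum_add_sum_compl T v
    _ ≤ (1 + cbar) * ∑ j ∈ T, |v j| := by linarith
    _ ≤ (1 + cbar) * (√(#T : ℝ) * r / κ) := by gcongr
    _ = (1 + cbar) * √(#T : ℝ) * r / κ := by ring

end Norms

section Likelihood

variable {n p : ℕ} (x : Fin n → Fin p → ℝ) (y : Fin n → ℝ)

lemma xdot_add (η δ : Fin p → ℝ) (i : Fin n) : xdot x (η + δ) i = xdot x η i + xdot x δ i :=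
  dotProduct_add (x i) η δ

lemma xdot_smul (a : ℝ) (δ : Fin p → ℝ) (i : Fin n) : xdot x (a • δ) i = a * xdot x δ i :=
  dotProduct_smul a (x i) δ

lemma wgt_eq_sigmoid (η₀ : Fin p → ℝ) (i : Fin n) :
    wgt x η₀ i = sigmoid (xdot x η₀ i) * (1 - sigmoid (xdot x η₀ i)) := by
  rw [wgt, logistic_eq_sigmoid]

lemma wgt_nonneg (η₀ : Fin p → ℝ) (i : Fin n) : 0 ≤ wgt x η₀ i := by
  rw [wgt_eq_sigmoid]
  exact mul_nonneg (sigmoid_pos _).le (sub_nonneg.2 (sigmoid_le_one _))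

lemma sum_gradLam_mul (η δ : Fin p → ℝ) :
    ∑ j, gradLam x y η j * δ j = 1 / n * ∑ i, (sigmoid (xdot x η i) - y i) * xdot x δ i := by
  simp only [gradLam, xdot, logistic_eq_sigmoid, sum_mul, mul_sum]
  rw [sum_comm]
  exact sum_congr rfl fun i _ => sum_congr rfl fun j _ => by ring

lemma predNorm_sq {w : Fin n → ℝ} (hw : ∀ i, 0 ≤ w i) (δ : Fin p → ℝ) :
    predNorm x w δ ^ 2 = 1 / n * ∑ i, w i * xdot x δ i ^ 2 :=
  sq_sqrt (mul_nonneg (by positivity) (sum_nonneg fun i _ => mul_nonneg (hw i) (sq_nonneg _)))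

noncomputable def bregmanLam (η δ : Fin p → ℝ) : ℝ :=
  Lam x y (η + δ) - Lam x y η - ∑ j, gradLam x y η j * δ j

lemma bregmanLam_eq_sum_softplusRemainder (η δ : Fin p → ℝ) :
    bregmanLam x y η δ = 1 / n * ∑ i, softplusRemainder (xdot x η i) (xdot x δ i) := by
  rw [bregmanLam, sum_gradLam_mul, Lam, Lam, ← mul_sub, ← mul_sub, ← sum_sub_distrib,
    ← sum_sub_distrib]
  congr 1
  refine sum_congr rfl fun i _ => ?_
  rw [softplusRemainder, softplus, softplus, xdot_add]
  ring

lemma bregmanLam_nonneg (η δ : Fin p → ℝ) : 0 ≤ bregmanLam x y η δ := by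
  rw [bregmanLam_eq_sum_softplusRemainder]
  exact mul_nonneg (by positivity) (sum_nonneg fun i _ => softplusRemainder_nonneg _ _)

lemma convexOn_Lam : ConvexOn ℝ univ (Lam x y) := by
  refine ⟨convex_univ, fun η _ ζ _ a b ha hb hab => ?_⟩
  set m := a • η + b • ζ
  have hη := bregmanLam_nonneg x y m (η - m)
  have hζ := bregmanLam_nonneg x y m (ζ - m)
  rw [bregmanLam, add_sub_cancel] at hη hζ
  have hbalance : a * ∑ j, gradLam x y m j * (η - m) j + b * ∑ j, gradLam x y m j * (ζ - m) j
      = 0 := by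
    rw [mul_sum, mul_sum, ← sum_add_distrib]
    refine sum_eq_zero fun j _ => ?_
    simp only [m, Pi.add_apply, Pi.sub_apply, Pi.smul_apply, smul_eq_mul]
    linear_combination (-(gradLam x y m j) * (a * η j + b * ζ j)) * hab
  have hsplit : Lam x y m = a * (Lam x y m + ∑ j, gradLam x y m j * (η - m) j)
      + b * (Lam x y m + ∑ j, gradLam x y m j * (ζ - m) j) := by
    linear_combination (-Lam x y m) * hab - hbalance
  rw [smul_eq_mul, smul_eq_mul, hsplit]
  gcongr <;> linarith

lemma sum_wgt_mul_le_bregmanLam (η₀ δ : Fin p → ℝ) :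
    1 / n * ∑ i, wgt x η₀ i * (xdot x δ i ^ 2 / 2 - |xdot x δ i| ^ 3 / 6)
      ≤ bregmanLam x y η₀ δ := by
  rw [bregmanLam_eq_sum_softplusRemainder]
  gcongr with i
  rw [wgt_eq_sigmoid]
  exact sigmoid_weight_mul_le_softplusRemainder _ _

lemma sq_sub_cube_le_bregmanLam_smul (η₀ δ : Fin p → ℝ) {a : ℝ} (ha : 0 ≤ a) :
    (a * predNorm x (wgt x η₀) δ) ^ 2 / 2
        - a ^ 3 * (1 / n * ∑ i, wgt x η₀ i * |xdot x δ i| ^ 3) / 6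
      ≤ bregmanLam x y η₀ (a • δ) := by
  refine Eq.trans_le ?_ (sum_wgt_mul_le_bregmanLam x y η₀ (a • δ))
  have hterm : ∀ i, wgt x η₀ i * (xdot x (a • δ) i ^ 2 / 2 - |xdot x (a • δ) i| ^ 3 / 6)
      = a ^ 2 / 2 * (wgt x η₀ i * xdot x δ i ^ 2)
        - a ^ 3 / 6 * (wgt x η₀ i * |xdot x δ i| ^ 3) := by
    intro i
    rw [xdot_smul, abs_mul, abs_of_nonneg ha]
    ring
  simp only [hterm, sum_sub_distrib, ← mul_sum]
  rw [mul_pow, predNorm_sq x (wgt_nonneg x η₀)]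
  ring

end Likelihood

section Estimator

variable {n p : ℕ} (x : Fin n → Fin p → ℝ) (y : Fin n → ℝ) (η₀ ηhat : Fin p → ℝ) {lam c : ℝ}

lemma eq_zero_of_notMem_supp (j : Fin p) (hj : j ∉ supp η₀) : η₀ j = 0 := by
  simpa [supp] using hj

theorem bregmanLam_le_of_isMin (hlam : 0 ≤ lam) (hc : 0 < c)
    (hpen : c * gradLamSup x y η₀ ≤ lam / n)
    (hmin : ∀ η, Lam x y ηhat + lam / n * l1norm ηhat ≤ Lam x y η + lam / n * l1norm η)
    {a : ℝ} (ha0 : 0 ≤ a) (ha1 : a ≤ 1) :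
    bregmanLam x y η₀ (a • (ηhat - η₀))
      ≤ a * (lam / n) * ((1 + 1 / c) * ∑ j ∈ supp η₀, |(ηhat - η₀) j|
        - (1 - 1 / c) * ∑ j ∈ (supp η₀)ᶜ, |(ηhat - η₀) j|) := by
  set δ := ηhat - η₀
  set ST := ∑ j ∈ supp η₀, |δ j|
  set SC := ∑ j ∈ (supp η₀)ᶜ, |δ j|
  have hpen0 : 0 ≤ lam / n := by positivity
  have hbasic : Lam x y (η₀ + a • δ) + lam / n * l1norm (η₀ + a • δ)
      ≤ Lam x y η₀ + lam / n * l1norm η₀ :=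
    ((convexOn_Lam x y).add (convexOn_l1norm.smul hpen0)).map_add_smul_sub_le hmin η₀ ha0 ha1
  have hsparse : l1norm η₀ - l1norm (η₀ + a • δ) ≤ a * ST - a * SC := by
    have := l1norm_sub_l1norm_add_le (eq_zero_of_notMem_supp η₀) (a • δ)
    rwa [sum_abs_smul, sum_abs_smul, abs_of_nonneg ha0] at this
  have hgrad : -∑ j, gradLam x y η₀ j * (a • δ) j ≤ lam / n * (1 / c) * (a * (ST + SC)) := by
    calc -∑ j, gradLam x y η₀ j * (a • δ) j ≤ |∑ j, gradLam x y η₀ j * (a • δ) j| := neg_le_abs _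
      _ ≤ gradLamSup x y η₀ * l1norm (a • δ) := abs_sum_mul_le_iSup_mul_l1norm _ _
      _ ≤ lam / n * (1 / c) * l1norm (a • δ) := by
          gcongr
          · exact sum_nonneg fun j _ => abs_nonneg _
          · rwa [mul_one_div, le_div_iff₀' hc]
      _ = lam / n * (1 / c) * (a * (ST + SC)) := by
          rw [l1norm_smul, abs_of_nonneg ha0, l1norm_eq_sum_add_sum_compl (supp η₀)]
  rw [bregmanLam]
  linarith [mul_le_mul_of_nonneg_left hsparse hpen0]

theorem inCone_of_isMin (hn : 0 < n) (hlam : 0 < lam) (hc : 1 < c)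
    (hpen : c * gradLamSup x y η₀ ≤ lam / n)
    (hmin : ∀ η, Lam x y ηhat + lam / n * l1norm ηhat ≤ Lam x y η + lam / n * l1norm η) :
    inCone (supp η₀) ((c + 1) / (c - 1)) (ηhat - η₀) := by
  have hbregman := bregmanLam_le_of_isMin x y η₀ ηhat hlam.le (by linarith) hpen hmin
    zero_le_one le_rfl
  rw [one_mul] at hbregman
  have hgap : 0 ≤ (1 + 1 / c) * ∑ j ∈ supp η₀, |(ηhat - η₀) j|
      - (1 - 1 / c) * ∑ j ∈ (supp η₀)ᶜ, |(ηhat - η₀) j| :=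
    nonneg_of_mul_nonneg_right ((bregmanLam_nonneg x y η₀ _).trans hbregman)
      (by positivity : (0 : ℝ) < lam / n)
  unfold inCone
  rw [div_mul_eq_mul_div, le_div_iff₀ (by linarith)]
  have hc0 : 0 < c := by linarith
  field_simp at hgap
  linarith

theorem predNorm_le_of_isMin (hlam : 0 ≤ lam) (hc : 1 < c)
    (hpen : c * gradLamSup x y η₀ ≤ lam / n)
    (hmin : ∀ η, Lam x y ηhat + lam / n * l1norm ηhat ≤ Lam x y η + lam / n * l1norm η)
    {κ q : ℝ} (hκ : 0 < κ)
    (hRE : κ * √(∑ j ∈ supp η₀, (ηhat - η₀) j ^ 2) ≤ predNorm x (wgt x η₀) (ηhat - η₀))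
    (hq : q * (1 / n * ∑ i, wgt x η₀ i * |xdot x (ηhat - η₀) i| ^ 3)
      ≤ (1 / n * ∑ i, wgt x η₀ i * xdot x (ηhat - η₀) i ^ 2) ^ ((3 : ℝ) / 2))
    (hqlarge : 3 * (1 + 1 / c) * lam * √(#(supp η₀) : ℝ) / (n * κ) < q) :
    predNorm x (wgt x η₀) (ηhat - η₀) ≤ 3 * (1 + 1 / c) * lam * √(#(supp η₀) : ℝ) / (n * κ) := by
  set δ := ηhat - η₀
  set s : ℝ := ((#(supp η₀) : ℕ) : ℝ)
  set R := 1 / n * ∑ i, wgt x η₀ i * |xdot x δ i| ^ 3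
  set r := predNorm x (wgt x η₀) δ
  set A := (1 + 1 / c) * lam * √s / (n * κ)
  have hR : q * R ≤ r ^ 3 := by
    rw [← predNorm_sq x (wgt_nonneg x η₀), ← rpow_natCast,
      ← rpow_mul (show 0 ≤ r from sqrt_nonneg _)] at hq
    norm_num at hq
    exact hq
  have hST := mul_sum_abs_le_sqrt_card_mul hκ.le hRE
  have hSC : 0 ≤ (1 - 1 / c) * ∑ j ∈ (supp η₀)ᶜ, |δ j| := by
    have : 1 / c ≤ 1 := (div_le_one (by linarith)).2 hc.le
    exact mul_nonneg (by linarith) (sum_nonneg fun j _ => abs_nonneg _)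
  have hcurv : ∀ a, 0 ≤ a → a ≤ 1 → (a * r) ^ 2 / 2 - a ^ 3 * R / 6 ≤ a * A * r := by
    intro a ha0 ha1
    calc (a * r) ^ 2 / 2 - a ^ 3 * R / 6 ≤ bregmanLam x y η₀ (a • δ) :=
          sq_sub_cube_le_bregmanLam_smul x y η₀ δ ha0
      _ ≤ a * (lam / n) * ((1 + 1 / c) * ∑ j ∈ supp η₀, |δ j|
            - (1 - 1 / c) * ∑ j ∈ (supp η₀)ᶜ, |δ j|) :=
          bregmanLam_le_of_isMin x y η₀ ηhat hlam (by linarith) hpen hmin ha0 ha1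
      _ ≤ a * (lam / n) * ((1 + 1 / c) * ∑ j ∈ supp η₀, |δ j|) := by
          gcongr
          exact sub_le_self _ hSC
      _ = a * ((1 + 1 / c) * lam / (n * κ)) * (κ * ∑ j ∈ supp η₀, |δ j|) := by field_simp
      _ ≤ a * ((1 + 1 / c) * lam / (n * κ)) * (√s * r) := by gcongr
      _ = a * A * r := by ring
  have h3A : 3 * A < q := by simpa only [A, mul_div_assoc, mul_assoc] using hqlarge
  calc r ≤ 3 * A := le_three_mul_of_forall_sq_sub_cube_le (by positivity) h3A hR hcurv
    _ = _ := by ring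

end Estimator

theorem lasso_logistic_rate_general {n p : ℕ} (hn : 0 < n)
    (x : Fin n → Fin p → ℝ) (y : Fin n → ℝ)
    (η₀ : Fin p → ℝ)
    (lam c : ℝ) (hlam : 0 < lam) (hc : 1 < c)
    (hpen : c * gradLamSup x y η₀ ≤ lam / (n : ℝ))
    (κ : ℝ) (hκ : 0 < κ)
    (hRE : ∀ δ : Fin p → ℝ, inCone (supp η₀) ((c + 1) / (c - 1)) δ →
      κ * Real.sqrt (∑ j ∈ supp η₀, δ j ^ 2) ≤ predNorm x (wgt x η₀) δ)
    (qbar : ℝ)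
    (hq : ∀ δ : Fin p → ℝ, inCone (supp η₀) ((c + 1) / (c - 1)) δ →
      qbar * ((1 / (n : ℝ)) * ∑ i, wgt x η₀ i * |xdot x δ i| ^ 3)
        ≤ ((1 / (n : ℝ)) * ∑ i, wgt x η₀ i * xdot x δ i ^ 2) ^ ((3 : ℝ) / 2))
    (hqlarge : 3 * (1 + 1 / c) * lam * Real.sqrt ((supp η₀).card) / ((n : ℝ) * κ) < qbar)
    (ηhat : Fin p → ℝ)
    (hmin : ∀ η : Fin p → ℝ,
      Lam x y ηhat + (lam / (n : ℝ)) * l1norm ηhat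
        ≤ Lam x y η + (lam / (n : ℝ)) * l1norm η) :
    predNorm x (wgt x η₀) (ηhat - η₀)
        ≤ 3 * (1 + 1 / c) * lam * Real.sqrt ((supp η₀).card) / ((n : ℝ) * κ) ∧
      l1norm (ηhat - η₀)
        ≤ 3 * ((1 + c) * (1 + (c + 1) / (c - 1)) / c) * lam * ((supp η₀).card : ℝ)
            / ((n : ℝ) * κ ^ 2) := by
  have hcone := inCone_of_isMin x y η₀ ηhat hn hlam hc hpen hmin
  have hpred := predNorm_le_of_isMin x y η₀ ηhat hlam.le hc hpen hmin hκ (hRE _ hcone)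
    (hq _ hcone) hqlarge
  refine ⟨hpred, ?_⟩
  have hc1 : 0 < c - 1 := by linarith
  calc l1norm (ηhat - η₀)
      ≤ (1 + (c + 1) / (c - 1)) * √(#(supp η₀) : ℝ) * predNorm x (wgt x η₀) (ηhat - η₀) / κ :=
        l1norm_le_of_inCone (by positivity) hκ hcone (hRE _ hcone)
    _ ≤ (1 + (c + 1) / (c - 1)) * √(#(supp η₀) : ℝ)
          * (3 * (1 + 1 / c) * lam * √(#(supp η₀) : ℝ) / (n * κ)) / κ := by gcongr
    _ = _ := by
        have hs := sq_sqrt (Nat.cast_nonneg (α := ℝ) #(supp η₀))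
        field_simp
        rw [hs]
        ring

/-- Rate of convergence of the ℓ1-penalized logistic regression estimator
(Lemma B.5): with `λ/n ≥ c‖∇Λ(η₀)‖_∞`, `c > 1`, `c̄ = (c+1)/(c−1)`, a weighted
restricted eigenvalue `κ` and a nonlinear impact coefficient `q̄` over the cone
`Δ_c̄`, with `q̄ > 3(1+1/c)λ√s/(nκ)`, any global minimizer `η̂` of the
ℓ1-penalized logistic criterion satisfies
`‖√w_i x_i'(η̂−η₀)‖_{2,n} ≤ 3(1+1/c)λ√s/(nκ)` and
`‖η̂−η₀‖₁ ≤ 3((1+c)(1+c̄)/c)λs/(nκ²)`. -/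
theorem lasso_logistic_rate {n p : ℕ} (hn : 0 < n) (hp : 0 < p)
    (x : Fin n → Fin p → ℝ) (y : Fin n → ℝ) (hy : ∀ i, y i = 0 ∨ y i = 1)
    (η₀ : Fin p → ℝ) (hs : 1 ≤ (supp η₀).card)
    (lam c : ℝ) (hlam : 0 < lam) (hc : 1 < c)
    (hpen : c * gradLamSup x y η₀ ≤ lam / (n : ℝ))
    (κ : ℝ) (hκ : 0 < κ)
    (hRE : ∀ δ : Fin p → ℝ, inCone (supp η₀) ((c + 1) / (c - 1)) δ →
      κ * Real.sqrt (∑ j ∈ supp η₀, δ j ^ 2) ≤ predNorm x (wgt x η₀) δ)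
    (qbar : ℝ) (hqbar : 0 < qbar)
    (hq : ∀ δ : Fin p → ℝ, inCone (supp η₀) ((c + 1) / (c - 1)) δ →
      qbar * ((1 / (n : ℝ)) * ∑ i, wgt x η₀ i * |xdot x δ i| ^ 3)
        ≤ ((1 / (n : ℝ)) * ∑ i, wgt x η₀ i * xdot x δ i ^ 2) ^ ((3 : ℝ) / 2))
    (hqlarge : 3 * (1 + 1 / c) * lam * Real.sqrt ((supp η₀).card) / ((n : ℝ) * κ) < qbar)
    (ηhat : Fin p → ℝ)
    (hmin : ∀ η : Fin p → ℝ,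
      Lam x y ηhat + (lam / (n : ℝ)) * l1norm ηhat
        ≤ Lam x y η + (lam / (n : ℝ)) * l1norm η) :
    predNorm x (wgt x η₀) (ηhat - η₀)
        ≤ 3 * (1 + 1 / c) * lam * Real.sqrt ((supp η₀).card) / ((n : ℝ) * κ) ∧
      l1norm (ηhat - η₀)
        ≤ 3 * ((1 + c) * (1 + (c + 1) / (c - 1)) / c) * lam * ((supp η₀).card : ℝ)
            / ((n : ℝ) * κ ^ 2) :=
  lasso_logistic_rate_general hn x y η₀ lam c hlam hc hpen κ hκ hRE qbar hq hqlarge ηhat hmin
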